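/- Let n ≥ 5 and let G be the graph on n vertices consisting of a cycle of length four together with n − 4 additional vertices, each adjacent to one fixed vertex of the cycle and to no other vertex (i.e., a 4-cycle with n − 4 pendant vertices attached to a single cycle vertex). Then q(G) = 3. -/

import Mathlib

open Matrix BigOperators

/-- The threshold graph on `Fin n` given by a creation sequence `b`:
for `i < j`, vertices `i` and `j` are adjacent iff `b j = true`. -/
def ThresholdGraph {n : ℕ} (b : Fin n → Bool) : SimpleGraph (Fin n) where
  Adj i j := i ≠ j ∧ ((i < j ∧ b j = true) ∨ (j < i ∧ b i = true))
  symm := ⟨fun _ _ h => ⟨h.1.symm, h.2.symm⟩⟩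
  loopless := ⟨fun _ h => h.1 rfl⟩

/-- The threshold graph whose creation sequence is given by a list of booleans. -/
def thresholdOfList (L : List Bool) : SimpleGraph (Fin L.length) where
  Adj i j := i ≠ j ∧ ((i < j ∧ L.get j = true) ∨ (j < i ∧ L.get i = true))
  symm := ⟨fun _ _ h => ⟨h.1.symm, h.2.symm⟩⟩
  loopless := ⟨fun _ h => h.1 rfl⟩

/-- `S(G)`: real symmetric matrices whose off-diagonal nonzero pattern is given by `G`. -/
def SMat {n : ℕ} (G : SimpleGraph (Fin n)) : Set (Matrix (Fin n) (Fin n) ℝ) :=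
  {A | A.IsSymm ∧ ∀ i j : Fin n, i ≠ j → (A i j ≠ 0 ↔ G.Adj i j)}

/-- The number of distinct (real) eigenvalues of a matrix. -/
noncomputable def numEig {n : ℕ} (A : Matrix (Fin n) (Fin n) ℝ) : ℕ :=
  (spectrum ℝ A).ncard

/-- `q(G)`: the minimum number of distinct eigenvalues over matrices in `S(G)`. -/
noncomputable def qGraph {n : ℕ} (G : SimpleGraph (Fin n)) : ℕ :=
  sInf (numEig '' SMat G)

/-- Asymmetric edge relation (on natural-number labels) for the graph consisting of a
4-cycle on vertices `0,1,2,3` together with pendant vertices `4,…,n-1`, each adjacent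
only to the fixed cycle vertex `0`. -/
def cyclePendantRel (a b : ℕ) : Prop :=
  (a = 0 ∧ b = 1) ∨ (a = 1 ∧ b = 2) ∨ (a = 2 ∧ b = 3) ∨ (a = 0 ∧ b = 3) ∨ (a = 0 ∧ 4 ≤ b)

/-- The graph on `n` vertices consisting of a 4-cycle (on `0,1,2,3`) with `n - 4`
pendant vertices all attached to the single cycle vertex `0`. -/
def cycleWithPendants (n : ℕ) : SimpleGraph (Fin n) where
  Adj i j := cyclePendantRel i.val j.val ∨ cyclePendantRel j.val i.val
  symm := ⟨fun _ _ h => h.symm⟩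
  loopless := ⟨fun i h => by
    simp only [cyclePendantRel] at h
    omega⟩

/-!
Lower bound: if `A ∈ S(G)` had at most two eigenvalues `l, m`, then `(A - l)(A - m) = 0`. Vertices
`4` and `1` are non-adjacent with the unique common neighbour `0`, so the `(4, 1)` entry of this
product is `A 4 0 * A 0 1 ≠ 0`.

Upper bound: let `u` be the indicator of the neighbours of `0`, `e_k` the standard basis,
`x = e₃ - e₁` and `y = s e₂` with `s² = (n - 2) / 2`. Then `M = u e₀ᵀ + e₀ uᵀ + x yᵀ + y xᵀ`
lies in `S(G)`, and as `u, e₀, x, y` are pairwise orthogonal with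
`|u|²|e₀|² = |x|²|y|² = n - 2`, we get `M³ = (n - 2) M`, so the eigenvalues of `M` lie among
`0, ±√(n - 2)`.
-/

section Polynomial

open Polynomial

theorem IsSelfAdjoint.sub_mul_sub_eq_zero {A : Type*} [Ring A] [StarRing A] [Algebra ℝ A]
    [TopologicalSpace A] [ContinuousFunctionalCalculus ℝ A IsSelfAdjoint] {a : A}
    (ha : IsSelfAdjoint a) {l m : ℝ} (h : spectrum ℝ a ⊆ {l, m}) :
    (a - algebraMap ℝ A l) * (a - algebraMap ℝ A m) = 0 := by
  have hvan : Set.EqOn (fun x => ((X - C l) * (X - C m)).eval x) 0 (spectrum ℝ a) := by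
    intro x hx
    rcases h hx with rfl | rfl <;> simp
  simpa using (cfc_polynomial ((X - C l) * (X - C m)) a).symm.trans (cfc_congr hvan)

theorem spectrum.ncard_le_natDegree_of_aeval_eq_zero {𝕜 A : Type*} [Field 𝕜] [Ring A]
    [Algebra 𝕜 A] {a : A} {p : 𝕜[X]} (hp : p ≠ 0) (ha : aeval a p = 0) :
    (spectrum 𝕜 a).ncard ≤ p.natDegree := by
  classical
  nontriviality A
  have hsub : spectrum 𝕜 a ⊆ p.roots.toFinset := fun k hk => by
    have := spectrum.subset_polynomial_aeval a p ⟨k, hk, rfl⟩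
    rw [ha, spectrum.zero_eq] at this
    simpa [hp] using this
  calc (spectrum 𝕜 a).ncard ≤ (p.roots.toFinset : Set 𝕜).ncard :=
        Set.ncard_le_ncard hsub (Finset.finite_toSet _)
    _ ≤ p.roots.card := by rw [Set.ncard_coe_finset]; exact Multiset.toFinset_card_le _
    _ ≤ p.natDegree := card_roots' p

theorem spectrum.ncard_le_three_of_mul_mul_self_eq_smul {𝕜 A : Type*} [Field 𝕜] [Ring A]
    [Algebra 𝕜 A] {a : A} {c : 𝕜} (ha : a * a * a = c • a) : (spectrum 𝕜 a).ncard ≤ 3 := by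
  have hmonic : (X ^ 3 - C c * X : 𝕜[X]).Monic := by monicity!
  refine (spectrum.ncard_le_natDegree_of_aeval_eq_zero hmonic.ne_zero ?_).trans ?_
  · simp [pow_succ, ha, Algebra.smul_def]
  · compute_degree!

end Polynomial

theorem Set.Finite.exists_subset_pair_of_ncard_le_two {α : Type*} [Nonempty α] {s : Set α}
    (hs : s.Finite) (h : s.ncard ≤ 2) : ∃ a b, s ⊆ {a, b} := by
  interval_cases hc : s.ncard
  · obtain ⟨a⟩ := ‹Nonempty α›
    exact ⟨a, a, by simp [(Set.ncard_eq_zero hs).mp hc]⟩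
  · obtain ⟨a, rfl⟩ := Set.ncard_eq_one.mp hc
    exact ⟨a, a, by simp⟩
  · obtain ⟨a, b, -, rfl⟩ := Set.ncard_eq_two.mp hc
    exact ⟨a, b, subset_rfl⟩

theorem Matrix.mul_mul_self_eq_smul_of_orthogonal {ι R : Type*} [Fintype ι] [CommRing R]
    {u v x y : ι → R} (huv : u ⬝ᵥ v = 0) (hux : u ⬝ᵥ x = 0) (huy : u ⬝ᵥ y = 0)
    (hvx : v ⬝ᵥ x = 0) (hvy : v ⬝ᵥ y = 0) (hxy : x ⬝ᵥ y = 0) {c : R}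
    (hc₁ : (u ⬝ᵥ u) * (v ⬝ᵥ v) = c) (hc₂ : (x ⬝ᵥ x) * (y ⬝ᵥ y) = c) :
    let M := vecMulVec u v + vecMulVec v u + vecMulVec x y + vecMulVec y x
    M * M * M = c • M := by
  have hvu : v ⬝ᵥ u = 0 := by rwa [dotProduct_comm]
  have hxu : x ⬝ᵥ u = 0 := by rwa [dotProduct_comm]
  have hyu : y ⬝ᵥ u = 0 := by rwa [dotProduct_comm]
  have hxv : x ⬝ᵥ v = 0 := by rwa [dotProduct_comm]
  have hyv : y ⬝ᵥ v = 0 := by rwa [dotProduct_comm]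
  have hyx : y ⬝ᵥ x = 0 := by rwa [dotProduct_comm]
  simp only [add_mul, mul_add, vecMulVec_mul_vecMulVec, vecMulVec_smul, Matrix.smul_mul,
    smul_smul, huv, hux, huy, hvx, hvy, hxy, hvu, hxu, hyu, hxv, hyv, hyx,
    vecMulVec_zero, zero_smul, smul_zero, add_zero, zero_add]
  rw [mul_comm (v ⬝ᵥ v), mul_comm (y ⬝ᵥ y), hc₁, hc₂]
  module

namespace SMat

variable {n : ℕ} {G : SimpleGraph (Fin n)} {A : Matrix (Fin n) (Fin n) ℝ}

theorem isHermitian (hA : A ∈ SMat G) : A.IsHermitian := by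
  rw [Matrix.IsHermitian, Matrix.conjTranspose_eq_transpose_of_trivial]
  exact hA.1

theorem apply_eq_zero (hA : A ∈ SMat G) {i j : Fin n} (hij : i ≠ j) (hnadj : ¬G.Adj i j) :
    A i j = 0 :=
  not_not.mp fun h => hnadj ((hA.2 i j hij).mp h)

theorem apply_ne_zero (hA : A ∈ SMat G) {i j : Fin n} (hadj : G.Adj i j) : A i j ≠ 0 :=
  (hA.2 i j hadj.ne).mpr hadj

theorem mul_self_apply_of_unique_common_neighbor (hA : A ∈ SMat G) {i j k : Fin n} (hij : i ≠ j)
    (hnadj : ¬G.Adj i j) (huniq : ∀ l, G.Adj i l → G.Adj l j → l = k) :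
    (A * A) i j = A i k * A k j := by
  have hAij := apply_eq_zero hA hij hnadj
  rw [Matrix.mul_apply, Finset.sum_eq_single k]
  · intro l _ hlk
    by_cases hli : l = i
    · simp [hli, hAij]
    by_cases hlj : l = j
    · simp [hlj, hAij]
    by_cases hil : G.Adj i l
    · simp [apply_eq_zero hA hlj fun hlj' => hlk (huniq l hil hlj')]
    · simp [apply_eq_zero hA (Ne.symm hli) hil]
  · simp

theorem three_le_numEig (hA : A ∈ SMat G) {i j k : Fin n} (hij : i ≠ j) (hnadj : ¬G.Adj i j)
    (hik : G.Adj i k) (hkj : G.Adj k j) (huniq : ∀ l, G.Adj i l → G.Adj l j → l = k) :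
    3 ≤ numEig A := by
  by_contra! h
  obtain ⟨l, m, hlm⟩ := A.finite_spectrum.exists_subset_pair_of_ncard_le_two (by
    unfold numEig at h; omega)
  have hzero := congrFun (congrFun ((isHermitian hA).isSelfAdjoint.sub_mul_sub_eq_zero hlm) i) j
  have hexpand : ((A - algebraMap ℝ _ l) * (A - algebraMap ℝ _ m)) i j = (A * A) i j := by
    simp [sub_mul, mul_sub, Algebra.algebraMap_eq_smul_one, apply_eq_zero hA hij hnadj, hij]
  rw [hexpand, mul_self_apply_of_unique_common_neighbor hA hij hnadj huniq] at hzero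
  exact mul_ne_zero (apply_ne_zero hA hik) (apply_ne_zero hA hkj) hzero

end SMat

namespace cycleWithPendants

theorem three_le_numEig {n : ℕ} (hn : 5 ≤ n) {A : Matrix (Fin n) (Fin n) ℝ}
    (hA : A ∈ SMat (cycleWithPendants n)) : 3 ≤ numEig A :=
  SMat.three_le_numEig hA (i := ⟨4, by omega⟩) (j := ⟨1, by omega⟩) (k := ⟨0, by omega⟩)
    (by simp) (by simp [cycleWithPendants, cyclePendantRel])
    (by simp [cycleWithPendants, cyclePendantRel]) (by simp [cycleWithPendants, cyclePendantRel])
    (fun l h₁ h₂ => by simp [cycleWithPendants, cyclePendantRel, Fin.ext_iff] at h₁ h₂ ⊢; omega)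

def nbrVec (k : ℕ) : ℝ := if k = 0 ∨ k = 2 then 0 else 1

def hubVec (k : ℕ) : ℝ := if k = 0 then 1 else 0

def rimVec (k : ℕ) : ℝ := if k = 3 then 1 else if k = 1 then -1 else 0

def farVec (s : ℝ) (k : ℕ) : ℝ := if k = 2 then s else 0

noncomputable def witness (n : ℕ) (s : ℝ) : Matrix (Fin n) (Fin n) ℝ :=
  vecMulVec (nbrVec ∘ Fin.val) (hubVec ∘ Fin.val)
    + vecMulVec (hubVec ∘ Fin.val) (nbrVec ∘ Fin.val)
    + vecMulVec (rimVec ∘ Fin.val) (farVec s ∘ Fin.val)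
    + vecMulVec (farVec s ∘ Fin.val) (rimVec ∘ Fin.val)

theorem entry_ne_zero_iff {s : ℝ} (hs : s ≠ 0) {a b : ℕ} (hab : a ≠ b) :
    nbrVec a * hubVec b + hubVec a * nbrVec b + rimVec a * farVec s b + farVec s a * rimVec b ≠ 0
      ↔ cyclePendantRel a b ∨ cyclePendantRel b a := by
  rcases a with _ | _ | _ | _ | a <;> rcases b with _ | _ | _ | _ | b <;>
    simp [nbrVec, hubVec, rimVec, farVec, cyclePendantRel, hs] at hab ⊢

theorem witness_mem_SMat {n : ℕ} {s : ℝ} (hs : s ≠ 0) :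
    witness n s ∈ SMat (cycleWithPendants n) := by
  refine ⟨?_, fun i j hij => ?_⟩
  · ext i j
    simp only [witness, Matrix.transpose_apply, Matrix.add_apply, vecMulVec_apply]
    ring
  · simpa [witness, vecMulVec_apply, cycleWithPendants] using
      entry_ne_zero_iff hs (Fin.val_ne_of_ne hij)

theorem dotProduct_comp_val {n : ℕ} (hn : 4 ≤ n) {f g : ℕ → ℝ}
    (h : ∀ j, f (j + 4) * g (j + 4) = f 4 * g 4) :
    (f ∘ Fin.val : Fin n → ℝ) ⬝ᵥ (g ∘ Fin.val) =
      f 0 * g 0 + f 1 * g 1 + f 2 * g 2 + f 3 * g 3 + (n - 4 : ℝ) * (f 4 * g 4) := by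
  obtain ⟨m, rfl⟩ := Nat.exists_eq_add_of_le hn
  change ∑ i : Fin (4 + m), f i * g i = _
  rw [Fin.sum_univ_eq_sum_range (fun k => f k * g k), Finset.sum_range_add]
  simp [Finset.sum_range_succ, add_comm 4, h]

theorem witness_mul_mul_self {n : ℕ} (hn : 4 ≤ n) {s : ℝ} (hs : 2 * s ^ 2 = n - 2) :
    witness n s * witness n s * witness n s = ((n : ℝ) - 2) • witness n s :=
  Matrix.mul_mul_self_eq_smul_of_orthogonal
    (by simp [dotProduct_comp_val hn, nbrVec, hubVec])
    (by simp [dotProduct_comp_val hn, nbrVec, rimVec])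
    (by simp [dotProduct_comp_val hn, nbrVec, farVec])
    (by simp [dotProduct_comp_val hn, hubVec, rimVec])
    (by simp [dotProduct_comp_val hn, hubVec, farVec])
    (by simp [dotProduct_comp_val hn, rimVec, farVec])
    (by simp [dotProduct_comp_val hn, nbrVec, hubVec]; ring)
    (by simp [dotProduct_comp_val hn, rimVec, farVec]; linear_combination hs)

end cycleWithPendants

open cycleWithPendants in
/-- For `n ≥ 5`, the graph consisting of a 4-cycle with `n - 4` pendant
vertices attached to a single cycle vertex satisfies `q(G) = 3`. -/
theorem stmt19 (n : ℕ) (hn : 5 ≤ n) :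
    qGraph (cycleWithPendants n) = 3 := by
  set s := √(((n : ℝ) - 2) / 2)
  have hn' : (5 : ℝ) ≤ n := by exact_mod_cast hn
  have hs : 2 * s ^ 2 = n - 2 := by
    rw [Real.sq_sqrt (by linarith)]
    ring
  have hmem : witness n s ∈ SMat (cycleWithPendants n) :=
    witness_mem_SMat (Real.sqrt_ne_zero'.mpr (by linarith))
  have hwitness : numEig (witness n s) = 3 :=
    le_antisymm (spectrum.ncard_le_three_of_mul_mul_self_eq_smul
      (witness_mul_mul_self (by omega) hs)) (three_le_numEig hn hmem)
  refine le_antisymm (Nat.sInf_le ⟨_, hmem, hwitness⟩) (le_csInf ⟨_, _, hmem, hwitness⟩ ?_)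
  rintro _ ⟨A, hA, rfl⟩
  exact three_le_numEig hn hA
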